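/- For a prime p ≥ 5 and r ≥ 1, if k₁, k₂ ≥ 2 are even, k₁ ≡ k₂ (mod φ(p^r)), and k₁, k₂ ≢ 0 (mod p-1), then every Fourier coefficient of 𝒬^{(p)}_{k₁} is congruent modulo p^r to the corresponding coefficient of 𝒬^{(p)}_{k₂}, where 𝒬^{(p)}_k := 2^{k-2}(k-1)! ⟨Q_k^{(p)}⟩_q and ⟨f⟩_q := (∑_{λ∈𝒫} f(λ) q^{|λ|}) / (∑_{λ∈𝒫} q^{|λ|}). -/

import Mathlib

/-- Size of the Durfee square of the partition with row lengths `f 0 ≥ f 1 ≥ …`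
(0-indexed rows): the number of diagonal cells. -/
noncomputable def durfee (f : ℕ → ℕ) : ℕ := Nat.card {i : ℕ | i < f i}

/-- The conjugate partition: `conjFun f j` is the length of the `j`-th column. -/
noncomputable def conjFun (f : ℕ → ℕ) : ℕ → ℕ := fun j => Nat.card {i : ℕ | j < f i}

/-- Arm length of the `i`-th diagonal cell. -/
def armLen (f : ℕ → ℕ) (i : ℕ) : ℕ := f i - (i + 1)

/-- Leg length of the `i`-th diagonal cell. -/
noncomputable def legLen (f : ℕ → ℕ) (i : ℕ) : ℕ := conjFun f i - (i + 1)

/-- `P_k(λ) = ∑_{c ∈ C_λ} sgn(c) c^k`, where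
`C_λ = {a_i + 1/2} ∪ {-(b_i + 1/2)}` are the Frobenius coordinates. -/
noncomputable def Pk (k : ℕ) (f : ℕ → ℕ) : ℚ :=
  ∑ i ∈ Finset.range (durfee f),
    (((armLen f i : ℚ) + 1/2) ^ k - (-((legLen f i : ℚ) + 1/2)) ^ k)

/-- A function `ℕ → ℕ` represents a partition if it is weakly decreasing
and eventually zero. -/
def IsPartitionFun (f : ℕ → ℕ) : Prop :=
  (∀ i j, i ≤ j → f j ≤ f i) ∧ (∃ N, ∀ i, N ≤ i → f i = 0)

/-- The regularized `P^{(p)}_k(λ) = ∑_{c ∈ C_λ, gcd(2c,p)=1} sgn(c) c^k`: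
only Frobenius coordinates `c` whose (odd integer) numerator `2c` is coprime
to `p` contribute. -/
noncomputable def Ppk (p k : ℕ) (f : ℕ → ℕ) : ℚ :=
  ∑ i ∈ Finset.range (durfee f),
    ((if ¬ p ∣ (2 * armLen f i + 1) then ((armLen f i : ℚ) + 1/2) ^ k else 0)
      - (if ¬ p ∣ (2 * legLen f i + 1) then (-((legLen f i : ℚ) + 1/2)) ^ k else 0))

/-- The row lengths (0-indexed) of a partition of `n` given as a multiset of parts:
`rows λ i` is the `i`-th largest part (or `0`). -/
noncomputable def rows {n : ℕ} (lam : n.Partition) : ℕ → ℕ :=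
  fun i => Nat.card {j : ℕ | i < Multiset.card (lam.parts.filter (fun x => j < x))}

/-- `β_k = -B_k(2^{k-1}-1)/(2^{k-1} k!)`. -/
noncomputable def betaCoeff (k : ℕ) : ℚ :=
  -(bernoulli k * ((2 : ℚ) ^ ((k : ℤ) - 1) - 1)) / ((2 : ℚ) ^ ((k : ℤ) - 1) * (Nat.factorial k))

/-- `Q_k^{(p)}(λ) = P^{(p)}_{k-1}(λ)/(k-1)! + β_k^{(p)}` with `β_k^{(p)} = (1-p^{k-1})β_k`. -/
noncomputable def Qpk (p k : ℕ) (f : ℕ → ℕ) : ℚ :=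
  Ppk p (k - 1) f / (Nat.factorial (k - 1)) + (1 - (p : ℚ) ^ (k - 1)) * betaCoeff k

/-- The numerator `∑_{λ ∈ 𝒫} Q_k^{(p)}(λ) q^{|λ|}` of the q-bracket, as a formal power series. -/
noncomputable def numSeries (p k : ℕ) : PowerSeries ℚ :=
  PowerSeries.mk fun n => ∑ lam : n.Partition, Qpk p k (rows lam)

/-- The partition generating function `∑_{λ ∈ 𝒫} q^{|λ|}`. -/
noncomputable def partGen : PowerSeries ℚ :=
  PowerSeries.mk fun n => (Fintype.card n.Partition : ℚ)

/-!
Multiplying by `2 ^ (k - 2) * (k - 1)!` turns `Q_k^{(p)}(λ)` into a sum of terms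
`(2x + 1) ^ (k - 1) / 2`, one for each Frobenius coordinate `±(x + 1/2)` with `p ∤ 2x + 1` (the
signs cancel since `k` is even), plus the constant
`-(2 ^ (k - 1) - 1) / 2 * (1 - p ^ (k - 1)) B_k / k`. The first part depends on `k` only modulo
`φ(p ^ r)` by Euler's theorem, the second one by Kummer's congruence.

Kummer's congruence comes from Voronoi's congruence: for `c` prime to `p`, expanding
`(c a) ^ k = (p ^ m ⌊c a / p ^ m⌋ + (c a mod p ^ m)) ^ k` and comparing with the Bernoulli formula
for `∑_{a < p ^ m, p ∤ a} a ^ k` shows that `(c ^ k - 1) (1 - p ^ (k - 1)) B_k / k` is the `p`-adic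
limit, as `m → ∞`, of the integers `∑_{a < p ^ m, p ∤ a} ⌊c a / p ^ m⌋ (c a mod p ^ m) ^ (k - 1)`,
whose residues modulo `p ^ r` depend only on `k` modulo `φ(p ^ r)`. For `c` a primitive root
modulo `p`, the factor `c ^ k - 1` is a `p`-adic unit as soon as `p - 1 ∤ k`.

Finally, the `q`-bracket is the quotient by the partition generating function, which has constant
term `1` and integer coefficients, so the coefficientwise congruence of the numerators passes to it.
-/

open Finset Filter Topology

theorem Nat.ModEq.pow_of_modEq_totient {a n k₁ k₂ : ℕ} (ha : a.Coprime n)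
    (h : k₁ ≡ k₂ [MOD n.totient]) : a ^ k₁ ≡ a ^ k₂ [MOD n] := by
  have reduce : ∀ k, a ^ k ≡ a ^ (k % n.totient) [MOD n] := fun k =>
    calc a ^ k = a ^ (k % n.totient) * (a ^ n.totient) ^ (k / n.totient) := by
          rw [← pow_mul, ← pow_add, Nat.mod_add_div]
      _ ≡ a ^ (k % n.totient) * 1 ^ (k / n.totient) [MOD n] :=
          ((Nat.ModEq.pow_totient ha).pow _).mul_left _
      _ = a ^ (k % n.totient) := by rw [one_pow, mul_one]
  exact (reduce k₁).trans (h ▸ reduce k₂).symm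

theorem Nat.ModEq.sub_one {a b n : ℕ} (ha : 1 ≤ a) (hb : 1 ≤ b) (h : a ≡ b [MOD n]) :
    a - 1 ≡ b - 1 [MOD n] :=
  Nat.ModEq.add_right_cancel' 1 (by rwa [Nat.sub_add_cancel ha, Nat.sub_add_cancel hb])

theorem IsUltrametricDist.norm_sub_le_max {G : Type*} [SeminormedAddGroup G] [IsUltrametricDist G]
    (x y : G) : ‖x - y‖ ≤ max ‖x‖ ‖y‖ := by
  simpa only [sub_eq_add_neg, norm_neg] using IsUltrametricDist.norm_add_le_max x (-y)

theorem IsUltrametricDist.norm_mul_sub_mul_le {K : Type*} [NormedRing K] [IsUltrametricDist K]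
    {x x' y y' : K} {ε : ℝ} (hx : ‖x‖ ≤ 1) (hy' : ‖y'‖ ≤ 1) (hxx' : ‖x - x'‖ ≤ ε)
    (hyy' : ‖y - y'‖ ≤ ε) : ‖x * y - x' * y'‖ ≤ ε := by
  rw [show x * y - x' * y' = x * (y - y') + (x - x') * y' by noncomm_ring]
  refine (norm_add_le_max _ _).trans (max_le ?_ ?_)
  · exact (norm_mul_le _ _).trans ((mul_le_of_le_one_left (norm_nonneg _) hx).trans hyy')
  · exact (norm_mul_le _ _).trans ((mul_le_of_le_one_right (norm_nonneg _) hy').trans hxx')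

namespace PowerSeries

theorem coeff_eq_sub_sum_of_mul_eq {R : Type*} [Ring R] {X G Y : PowerSeries R}
    (hG₀ : constantCoeff G = 1) (h : X * G = Y) (n : ℕ) :
    coeff n X = coeff n Y - ∑ i ∈ range n, coeff i X * coeff (n - i) G := by
  rw [← h, coeff_mul, Nat.sum_antidiagonal_eq_sum_range_succ_mk, sum_range_succ, Nat.sub_self,
    coeff_zero_eq_constantCoeff_apply, hG₀, mul_one, add_sub_cancel_left]

theorem norm_coeff_le_of_mul_eq {K : Type*} [NormedRing K] [IsUltrametricDist K]
    {X G Y : PowerSeries K} {ε : ℝ} (hG₀ : constantCoeff G = 1)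
    (hG : ∀ n, ‖coeff n G‖ ≤ 1) (hY : ∀ n, ‖coeff n Y‖ ≤ ε) (h : X * G = Y) (n : ℕ) :
    ‖coeff n X‖ ≤ ε := by
  induction n using Nat.strong_induction_on with
  | _ n ih =>
    have hε : 0 ≤ ε := (norm_nonneg _).trans (hY 0)
    rw [coeff_eq_sub_sum_of_mul_eq hG₀ h]
    refine (IsUltrametricDist.norm_sub_le_max _ _).trans (max_le (hY n) ?_)
    refine IsUltrametricDist.norm_sum_le_of_forall_le_of_nonneg hε fun i hi => ?_
    exact (norm_mul_le _ _).trans <|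
      (mul_le_of_le_one_right (norm_nonneg _) (hG _)).trans (ih i (mem_range.mp hi))

end PowerSeries

theorem sum_mul_mod_eq_of_coprime {M : Type*} [AddCommMonoid M] {N c : ℕ} (hc : c.Coprime N)
    {s : Finset ℕ} (hs : s ⊆ range N) (hmaps : ∀ a ∈ s, c * a % N ∈ s) (g : ℕ → M) :
    ∑ a ∈ s, g (c * a % N) = ∑ a ∈ s, g a := by
  have hinj : Set.InjOn (fun a => c * a % N) s := fun a ha b hb hab =>
    (Nat.ModEq.cancel_left_of_coprime (Nat.gcd_comm N c ▸ hc) hab).eq_of_lt_of_lt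
      (mem_range.mp (hs ha)) (mem_range.mp (hs hb))
  exact sum_nbij _ hmaps hinj (surjOn_of_injOn_of_card_le _ hmaps hinj le_rfl) fun _ _ => rfl

theorem exists_add_pow_eq_add_mul_add_sq_mul {R : Type*} [CommRing R] (x y : R) (k : ℕ) :
    ∃ z : R, (x + y) ^ k = x ^ k + k * y * x ^ (k - 1) + y ^ 2 * z := by
  obtain ⟨z, hz⟩ := Polynomial.binomExpansion (Polynomial.X ^ k) x y
  refine ⟨z, ?_⟩
  simp only [Polynomial.eval_pow, Polynomial.eval_X, Polynomial.derivative_X_pow,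
    Polynomial.eval_mul, Polynomial.eval_C] at hz
  rw [hz]
  ring

theorem sum_range_mul_filter_dvd {M : Type*} [AddCommMonoid M] {d : ℕ} (hd : 0 < d) (n : ℕ)
    (g : ℕ → M) : ∑ a ∈ range (d * n) with d ∣ a, g a = ∑ b ∈ range n, g (d * b) := by
  refine (sum_nbij' (d * ·) (· / d) ?_ ?_ ?_ ?_ fun _ _ => rfl).symm
  · intro b hb
    simp only [mem_filter, mem_range] at hb ⊢
    exact ⟨Nat.mul_lt_mul_of_pos_left hb hd, dvd_mul_right d b⟩
  · intro a ha
    simp only [mem_filter, mem_range] at ha ⊢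
    exact Nat.div_lt_of_lt_mul ha.1
  · intro b _
    exact Nat.mul_div_cancel_left b hd
  · intro a ha
    exact Nat.mul_div_cancel' (mem_filter.mp ha).2

namespace Padic

variable {p : ℕ} [hp : Fact p.Prime]

theorem norm_natCast_sub_le_of_modEq {a b r : ℕ} (h : a ≡ b [MOD p ^ r]) :
    ‖(a : ℚ_[p]) - b‖ ≤ (p : ℝ) ^ (-(r : ℤ)) := by
  have hdvd : ((p ^ r : ℕ) : ℤ) ∣ (a : ℤ) - b := Nat.modEq_iff_dvd.mp h.symm
  exact_mod_cast (norm_int_le_pow_iff_dvd ((a : ℤ) - b) r).mpr (by exact_mod_cast hdvd)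

theorem norm_pow_sub_pow_le_of_modEq_totient {a r k₁ k₂ : ℕ} (ha : ¬ p ∣ a)
    (h : k₁ ≡ k₂ [MOD (p ^ r).totient]) :
    ‖(a : ℚ_[p]) ^ k₁ - (a : ℚ_[p]) ^ k₂‖ ≤ (p : ℝ) ^ (-(r : ℤ)) := by
  have hcop : a.Coprime (p ^ r) :=
    ((Nat.Prime.coprime_iff_not_dvd hp.out).mpr ha).symm.pow_right r
  exact_mod_cast norm_natCast_sub_le_of_modEq (Nat.ModEq.pow_of_modEq_totient hcop h)

theorem norm_two_eq_one (hp2 : p ≠ 2) : ‖(2 : ℚ_[p])‖ = 1 := by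
  exact_mod_cast norm_natCast_eq_one_iff.mpr ((Nat.coprime_primes hp.out Nat.prime_two).mpr hp2)

end Padic

noncomputable def powerSumRem (k n : ℕ) : ℚ :=
  ∑ i ∈ range k, bernoulli i * (k + 1).choose i / (k + 1) * (n : ℚ) ^ (k - 1 - i)

theorem sum_range_pow_eq_bernoulli_mul_add {k : ℕ} (hk : 1 ≤ k) (n : ℕ) :
    ∑ a ∈ range n, (a : ℚ) ^ k = bernoulli k * n + n ^ 2 * powerSumRem k n := by
  have hlast : bernoulli k * (k + 1).choose k * (n : ℚ) ^ (k + 1 - k) / (k + 1)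
      = bernoulli k * n := by
    have : (k : ℚ) + 1 ≠ 0 := by positivity
    rw [Nat.choose_succ_self_right, Nat.add_sub_cancel_left]
    push_cast
    field_simp
  rw [sum_range_pow, sum_range_succ, hlast, powerSumRem, mul_sum, add_comm]
  congr 1
  refine sum_congr rfl fun i hi => ?_
  rw [show k + 1 - i = k - 1 - i + 2 by have := mem_range.mp hi; omega]
  ring

theorem Padic.exists_forall_norm_powerSumRem_le (p k : ℕ) [Fact p.Prime] :
    ∃ E, ∀ n : ℕ, ‖(powerSumRem k n : ℚ_[p])‖ ≤ E := by
  refine ⟨∑ i ∈ range k, ‖((bernoulli i * (k + 1).choose i / (k + 1) : ℚ) : ℚ_[p])‖, fun n => ?_⟩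
  rw [powerSumRem, Rat.cast_sum]
  refine (norm_sum_le _ _).trans (sum_le_sum fun i _ => ?_)
  rw [Rat.cast_mul, norm_mul, Rat.cast_pow, norm_pow, Rat.cast_natCast]
  exact mul_le_of_le_one_right (norm_nonneg _)
    (pow_le_one₀ (norm_nonneg _) (IsUltrametricDist.norm_natCast_le_one _ n))

theorem sum_range_pow_filter_not_dvd_pow_eq {p m k : ℕ} (hp : 0 < p) (hm : 1 ≤ m)
    (hk : 2 ≤ k) :
    ∑ a ∈ range (p ^ m) with ¬ p ∣ a, (a : ℚ) ^ k
      = (1 - (p : ℚ) ^ (k - 1)) * bernoulli k * p ^ m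
        + ((p : ℚ) ^ m) ^ 2
          * (powerSumRem k (p ^ m) - p ^ (k - 2) * powerSumRem k (p ^ (m - 1))) := by
  obtain ⟨m, rfl⟩ := Nat.exists_eq_add_of_le' hm
  obtain ⟨k, rfl⟩ := Nat.exists_eq_add_of_le' hk
  have hmult : ∑ a ∈ range (p ^ (m + 1)) with p ∣ a, (a : ℚ) ^ (k + 2)
      = (p : ℚ) ^ (k + 2) * ∑ b ∈ range (p ^ m), (b : ℚ) ^ (k + 2) := by
    rw [pow_succ', sum_range_mul_filter_dvd hp, mul_sum]
    simp only [Nat.cast_mul, mul_pow]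
  rw [← add_sub_cancel_left (∑ a ∈ range (p ^ (m + 1)) with p ∣ a, (a : ℚ) ^ (k + 2))
    (∑ a ∈ range (p ^ (m + 1)) with ¬ p ∣ a, (a : ℚ) ^ (k + 2)), sum_filter_add_sum_filter_not,
    hmult, sum_range_pow_eq_bernoulli_mul_add (by omega),
    sum_range_pow_eq_bernoulli_mul_add (by omega)]
  simp only [Nat.add_sub_cancel, show k + 2 - 1 = k + 1 by omega]
  push_cast
  ring

noncomputable def voronoiSum (p m c k : ℕ) : ℕ :=
  ∑ a ∈ range (p ^ m) with ¬ p ∣ a, c * a / p ^ m * (c * a % p ^ m) ^ (k - 1)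

section Voronoi

variable {p : ℕ} [hp : Fact p.Prime]

theorem prime_dvd_mul_mod_prime_pow_iff {m c : ℕ} (hm : 1 ≤ m) (hc : ¬ p ∣ c) (a : ℕ) :
    p ∣ c * a % p ^ m ↔ p ∣ a := by
  rw [Nat.dvd_mod_iff (dvd_pow_self p (by omega)), hp.out.dvd_mul, or_iff_right hc]

theorem voronoi_congruence {m c k : ℕ} (hm : 1 ≤ m) (hc : ¬ p ∣ c) :
    ∃ Z : ℤ, ((c : ℤ) ^ k - 1) * ∑ a ∈ range (p ^ m) with ¬ p ∣ a, (a : ℤ) ^ k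
      = k * p ^ m * voronoiSum p m c k + (p ^ m) ^ 2 * Z := by
  set N := p ^ m
  set U := {a ∈ range N | ¬ p ∣ a}
  have hU : ∀ a ∈ U, c * a % N ∈ U := fun a ha => by
    simp only [U, mem_filter, mem_range] at ha ⊢
    exact ⟨Nat.mod_lt _ (pow_pos hp.out.pos m),
      (prime_dvd_mul_mod_prime_pow_iff hm hc a).not.mpr ha.2⟩
  have hcop : c.Coprime N := ((Nat.Prime.coprime_iff_not_dvd hp.out).mpr hc).symm.pow_right m
  have hexpand : ∀ n : ℕ, ∃ z : ℤ, (n : ℤ) ^ k = ((n % N : ℕ) : ℤ) ^ k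
      + k * N * ((n / N * (n % N) ^ (k - 1) : ℕ) : ℤ) + N ^ 2 * z := fun n => by
    obtain ⟨z, hz⟩ := exists_add_pow_eq_add_mul_add_sq_mul ((n % N : ℕ) : ℤ) (N * (n / N : ℕ)) k
    refine ⟨(n / N : ℕ) ^ 2 * z, ?_⟩
    have hn : (n : ℤ) = (n % N : ℕ) + N * (n / N : ℕ) := by
      exact_mod_cast (Nat.mod_add_div n N).symm
    rw [hn, hz]
    push_cast
    ring
  choose z hz using hexpand
  refine ⟨∑ a ∈ U, z (c * a), ?_⟩
  calc ((c : ℤ) ^ k - 1) * ∑ a ∈ U, (a : ℤ) ^ k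
      = ∑ a ∈ U, ((c * a : ℕ) : ℤ) ^ k - ∑ a ∈ U, ((c * a % N : ℕ) : ℤ) ^ k := by
        rw [sum_mul_mod_eq_of_coprime hcop (filter_subset _ _) hU (fun b => ((b : ℕ) : ℤ) ^ k),
          sub_one_mul, mul_sum]
        push_cast
        simp only [U, mul_pow]
    _ = _ := by
        rw [← sum_sub_distrib, voronoiSum, Nat.cast_sum, mul_sum, mul_sum, ← sum_add_distrib]
        exact sum_congr rfl fun a _ => by rw [hz (c * a)]; simp only [N]; push_cast; ring

end Voronoi

noncomputable def regBernoulliQuot (p k : ℕ) : ℚ := (1 - (p : ℚ) ^ (k - 1)) * bernoulli k / k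

namespace Padic

variable {p : ℕ} [hp : Fact p.Prime]

theorem exists_forall_norm_sub_voronoiSum_le {c k : ℕ} (hk : 2 ≤ k) (hc : ¬ p ∣ c) :
    ∃ C, ∀ m, 1 ≤ m → ‖((c : ℚ_[p]) ^ k - 1) * regBernoulliQuot p k - voronoiSum p m c k‖
      ≤ C * ‖(p : ℚ_[p])‖ ^ m := by
  obtain ⟨E, hE⟩ := exists_forall_norm_powerSumRem_le p k
  refine ⟨max 1 E / ‖(k : ℚ_[p])‖, fun m hm => ?_⟩
  obtain ⟨Z, hZ⟩ := voronoi_congruence (k := k) hm hc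
  set δ : ℚ := powerSumRem k (p ^ m) - p ^ (k - 2) * powerSumRem k (p ^ (m - 1))
  have hkey : ((c : ℚ) ^ k - 1) * regBernoulliQuot p k - voronoiSum p m c k
      = p ^ m * (Z - ((c : ℚ) ^ k - 1) * δ) / k := by
    have hZ' := congrArg (Int.cast : ℤ → ℚ) hZ
    push_cast at hZ'
    rw [sum_range_pow_filter_not_dvd_pow_eq hp.out.pos hm hk] at hZ'
    have hk0 : (k : ℚ) ≠ 0 := by exact_mod_cast (show k ≠ 0 by omega)
    have hp0 : (p : ℚ) ^ m ≠ 0 := pow_ne_zero _ (by exact_mod_cast hp.out.ne_zero)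
    rw [regBernoulliQuot, eq_div_iff hk0, sub_mul, mul_assoc, div_mul_cancel₀ _ hk0]
    apply mul_left_cancel₀ hp0
    linear_combination hZ'
  have hδ : ‖(δ : ℚ_[p])‖ ≤ max 1 E := by
    push_cast [δ]
    refine (IsUltrametricDist.norm_sub_le_max _ _).trans (max_le (le_max_of_le_right (hE _)) ?_)
    rw [norm_mul, ← Nat.cast_pow]
    exact le_max_of_le_right <| (mul_le_of_le_one_left (norm_nonneg _)
      (IsUltrametricDist.norm_natCast_le_one _ _)).trans (hE _)
  have hrest : ‖(((Z : ℚ) - ((c : ℚ) ^ k - 1) * δ : ℚ) : ℚ_[p])‖ ≤ max 1 E := by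
    have hunit : ‖(((c ^ k - 1 : ℤ) : ℚ) : ℚ_[p])‖ ≤ 1 := by
      rw [Rat.cast_intCast]; exact norm_int_le_one _
    push_cast at hunit ⊢
    refine (IsUltrametricDist.norm_sub_le_max _ _).trans (max_le ?_ ?_)
    · exact le_max_of_le_left (norm_int_le_one Z)
    · rw [norm_mul]
      exact (mul_le_of_le_one_left (norm_nonneg _) hunit).trans hδ
  have hcast : ((c : ℚ_[p]) ^ k - 1) * regBernoulliQuot p k - voronoiSum p m c k
      = ((((c : ℚ) ^ k - 1) * regBernoulliQuot p k - voronoiSum p m c k : ℚ) : ℚ_[p]) := by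
    push_cast; rfl
  rw [hcast, hkey, Rat.cast_div, Rat.cast_mul, norm_div, norm_mul, Rat.cast_pow, norm_pow,
    Rat.cast_natCast, Rat.cast_natCast, div_mul_eq_mul_div, mul_comm]
  exact div_le_div_of_nonneg_right
    (mul_le_mul_of_nonneg_right hrest (pow_nonneg (norm_nonneg _) _)) (norm_nonneg _)

theorem tendsto_voronoiSum {c k : ℕ} (hk : 2 ≤ k) (hc : ¬ p ∣ c) :
    Tendsto (fun m => (voronoiSum p m c k : ℚ_[p])) atTop
      (𝓝 (((c : ℚ_[p]) ^ k - 1) * regBernoulliQuot p k)) := by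
  obtain ⟨C, hC⟩ := exists_forall_norm_sub_voronoiSum_le hk hc
  rw [tendsto_iff_norm_sub_tendsto_zero]
  have hpow := (tendsto_pow_atTop_nhds_zero_of_lt_one (norm_nonneg _) (norm_p_lt_one (p := p)))
  refine squeeze_zero' (Eventually.of_forall fun _ => norm_nonneg _)
    (eventually_atTop.mpr ⟨1, fun m hm => (norm_sub_rev _ _).trans_le (hC m hm)⟩) ?_
  simpa using hpow.const_mul C

theorem exists_norm_pow_sub_one_eq_one :
    ∃ c : ℕ, ¬ p ∣ c ∧ ∀ k, ¬ (p - 1) ∣ k → ‖(c : ℚ_[p]) ^ k - 1‖ = 1 := by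
  obtain ⟨g, hg⟩ := IsCyclic.exists_generator (α := (ZMod p)ˣ)
  have horder : orderOf g = p - 1 := by
    rw [orderOf_eq_card_of_forall_mem_zpowers hg, Nat.card_eq_fintype_card, ZMod.card_units]
  have hval : (((g : ZMod p).val : ℕ) : ZMod p) = g := ZMod.natCast_zmod_val _
  refine ⟨(g : ZMod p).val, fun h => g.ne_zero ?_, fun k hk => ?_⟩
  · rw [← hval, ZMod.natCast_eq_zero_iff]
    exact h
  · have hndvd : ¬ (p : ℤ) ∣ ((g : ZMod p).val : ℤ) ^ k - 1 := fun h => by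
      refine hk (horder ▸ orderOf_dvd_of_pow_eq_one (Units.ext ?_))
      have h0 := (ZMod.intCast_zmod_eq_zero_iff_dvd _ p).mpr h
      push_cast [hval] at h0
      push_cast
      linear_combination h0
    have hlt := (norm_intCast_lt_one_iff (p := p)).not.mpr hndvd
    push_cast at hlt
    exact le_antisymm (by exact_mod_cast norm_int_le_one (((g : ZMod p).val : ℤ) ^ k - 1))
      (not_lt.mp hlt)

theorem norm_voronoiSum_sub_le {m c r k₁ k₂ : ℕ} (hm : 1 ≤ m) (hc : ¬ p ∣ c)
    (h : k₁ - 1 ≡ k₂ - 1 [MOD (p ^ r).totient]) :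
    ‖(voronoiSum p m c k₁ : ℚ_[p]) - voronoiSum p m c k₂‖ ≤ (p : ℝ) ^ (-(r : ℤ)) := by
  simp only [voronoiSum, Nat.cast_sum, Nat.cast_mul, Nat.cast_pow, ← sum_sub_distrib, ← mul_sub]
  refine IsUltrametricDist.norm_sum_le_of_forall_le_of_nonneg (by positivity) fun a ha => ?_
  have hres : ¬ p ∣ c * a % p ^ m :=
    (prime_dvd_mul_mod_prime_pow_iff hm hc a).not.mpr (mem_filter.mp ha).2
  exact (norm_mul_le _ _).trans <| (mul_le_of_le_one_left (norm_nonneg _)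
    (IsUltrametricDist.norm_natCast_le_one _ _)).trans
    (norm_pow_sub_pow_le_of_modEq_totient hres h)

theorem norm_regBernoulliQuot_le_one {k : ℕ} (hk : 2 ≤ k) (hnd : ¬ (p - 1) ∣ k) :
    ‖(regBernoulliQuot p k : ℚ_[p])‖ ≤ 1 := by
  obtain ⟨c, hc, hunit⟩ := exists_norm_pow_sub_one_eq_one (p := p)
  have h := le_of_tendsto' (tendsto_voronoiSum hk hc).norm fun m =>
    IsUltrametricDist.norm_natCast_le_one ℚ_[p] (voronoiSum p m c k)
  rwa [norm_mul, hunit k hnd, one_mul] at h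

/-- Kummer's congruence for `(1 - p ^ (k - 1)) * B_k / k`. -/
theorem norm_regBernoulliQuot_sub_le {r k₁ k₂ : ℕ} (hk₁ : 2 ≤ k₁) (hk₂ : 2 ≤ k₂)
    (hcong : k₁ ≡ k₂ [MOD (p ^ r).totient]) (hnd₁ : ¬ (p - 1) ∣ k₁) (hnd₂ : ¬ (p - 1) ∣ k₂) :
    ‖(regBernoulliQuot p k₁ : ℚ_[p]) - regBernoulliQuot p k₂‖ ≤ (p : ℝ) ^ (-(r : ℤ)) := by
  obtain ⟨c, hc, hunit⟩ := exists_norm_pow_sub_one_eq_one (p := p)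
  set w₁ := (regBernoulliQuot p k₁ : ℚ_[p])
  set w₂ := (regBernoulliQuot p k₂ : ℚ_[p])
  have hlim : ‖((c : ℚ_[p]) ^ k₁ - 1) * w₁ - ((c : ℚ_[p]) ^ k₂ - 1) * w₂‖
      ≤ (p : ℝ) ^ (-(r : ℤ)) :=
    le_of_tendsto ((tendsto_voronoiSum hk₁ hc).sub (tendsto_voronoiSum hk₂ hc)).norm
      (eventually_atTop.mpr ⟨1, fun m hm =>
        norm_voronoiSum_sub_le hm hc (hcong.sub_one (by omega) (by omega))⟩)
  have hc₁₂ := norm_pow_sub_pow_le_of_modEq_totient hc hcong.symm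
  calc ‖w₁ - w₂‖ = ‖((c : ℚ_[p]) ^ k₁ - 1) * (w₁ - w₂)‖ := by
        rw [norm_mul, hunit k₁ hnd₁, one_mul]
    _ = ‖(((c : ℚ_[p]) ^ k₁ - 1) * w₁ - ((c : ℚ_[p]) ^ k₂ - 1) * w₂)
          + ((c : ℚ_[p]) ^ k₂ - c ^ k₁) * w₂‖ := by ring_nf
    _ ≤ (p : ℝ) ^ (-(r : ℤ)) := (IsUltrametricDist.norm_add_le_max _ _).trans <| max_le hlim <|
        (norm_mul_le _ _).trans <| (mul_le_of_le_one_right (norm_nonneg _)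
          (norm_regBernoulliQuot_le_one hk₂ hnd₂)).trans hc₁₂

end Padic

noncomputable def frobeniusTerm (p k x : ℕ) : ℚ :=
  if ¬ p ∣ 2 * x + 1 then ((2 * x + 1 : ℕ) : ℚ) ^ (k - 1) / 2 else 0

theorem two_pow_mul_add_half_pow {k : ℕ} (hk : 2 ≤ k) (x : ℕ) :
    (2 : ℚ) ^ (k - 2) * ((x : ℚ) + 1 / 2) ^ (k - 1) = ((2 * x + 1 : ℕ) : ℚ) ^ (k - 1) / 2 := by
  obtain ⟨j, rfl⟩ := Nat.exists_eq_add_of_le' hk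
  rw [show j + 2 - 2 = j by omega, show j + 2 - 1 = j + 1 by omega,
    show (x : ℚ) + 1 / 2 = ((2 * x + 1 : ℕ) : ℚ) / 2 by push_cast; ring, div_pow, pow_succ 2 j]
  field_simp

theorem scaled_betaCoeff_eq {p k : ℕ} (hk : 2 ≤ k) :
    (2 : ℚ) ^ (k - 2) * (k - 1).factorial * ((1 - (p : ℚ) ^ (k - 1)) * betaCoeff k)
      = -((2 ^ (k - 1) - 1) / 2 * regBernoulliQuot p k) := by
  obtain ⟨j, rfl⟩ := Nat.exists_eq_add_of_le' hk
  rw [betaCoeff, regBernoulliQuot, show ((j + 2 : ℕ) : ℤ) - 1 = ((j + 1 : ℕ) : ℤ) by omega,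
    zpow_natCast, show j + 2 - 2 = j by omega, show j + 2 - 1 = j + 1 by omega,
    Nat.factorial_succ (j + 1)]
  push_cast
  field_simp
  ring

theorem scaled_Qpk_eq {p k : ℕ} (hk : 2 ≤ k) (he : Even k) (f : ℕ → ℕ) :
    (2 : ℚ) ^ (k - 2) * (k - 1).factorial * Qpk p k f
      = ∑ i ∈ range (durfee f), (frobeniusTerm p k (armLen f i) + frobeniusTerm p k (legLen f i))
        - (2 ^ (k - 1) - 1) / 2 * regBernoulliQuot p k := by
  have hodd : Odd (k - 1) := Nat.Even.sub_odd (by omega) he odd_one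
  have hfact : ((k - 1).factorial : ℚ) ≠ 0 := by positivity
  rw [Qpk, mul_add, scaled_betaCoeff_eq hk, ← sub_eq_add_neg, mul_assoc, mul_div_cancel₀ _ hfact,
    Ppk, mul_sum]
  congr 1
  refine sum_congr rfl fun i _ => ?_
  simp only [frobeniusTerm, mul_sub, mul_ite, mul_zero, hodd.neg_pow, mul_neg,
    two_pow_mul_add_half_pow hk]
  split_ifs <;> ring

namespace Padic

variable {p : ℕ} [hp : Fact p.Prime]

theorem norm_frobeniusTerm_sub_le {r k₁ k₂ : ℕ} (hp2 : p ≠ 2)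
    (h : k₁ - 1 ≡ k₂ - 1 [MOD (p ^ r).totient]) (x : ℕ) :
    ‖(frobeniusTerm p k₁ x : ℚ_[p]) - frobeniusTerm p k₂ x‖ ≤ (p : ℝ) ^ (-(r : ℤ)) := by
  unfold frobeniusTerm
  split_ifs with hx
  · simp only [Rat.cast_zero, sub_zero, norm_zero]
    positivity
  · push_cast
    rw [← sub_div, norm_div, norm_two_eq_one hp2, div_one]
    exact_mod_cast norm_pow_sub_pow_le_of_modEq_totient hx h

theorem norm_scaled_Qpk_sub_le {r k₁ k₂ : ℕ} (hp2 : p ≠ 2) (he₁ : Even k₁) (he₂ : Even k₂)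
    (hk₁ : 2 ≤ k₁) (hk₂ : 2 ≤ k₂) (hcong : k₁ ≡ k₂ [MOD (p ^ r).totient])
    (hnd₁ : ¬ (p - 1) ∣ k₁) (hnd₂ : ¬ (p - 1) ∣ k₂) (f : ℕ → ℕ) :
    ‖((2 ^ (k₁ - 2) * (k₁ - 1).factorial * Qpk p k₁ f : ℚ) : ℚ_[p])
      - ((2 ^ (k₂ - 2) * (k₂ - 1).factorial * Qpk p k₂ f : ℚ) : ℚ_[p])‖
      ≤ (p : ℝ) ^ (-(r : ℤ)) := by
  have hcong' := hcong.sub_one (by omega) (by omega)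
  rw [scaled_Qpk_eq hk₁ he₁, scaled_Qpk_eq hk₂ he₂]
  push_cast
  rw [sub_sub_sub_comm, ← sum_sub_distrib]
  refine (IsUltrametricDist.norm_sub_le_max _ _).trans (max_le ?_ ?_)
  · refine IsUltrametricDist.norm_sum_le_of_forall_le_of_nonneg (by positivity) fun i _ => ?_
    rw [add_sub_add_comm]
    exact (IsUltrametricDist.norm_add_le_max _ _).trans
      (max_le (norm_frobeniusTerm_sub_le hp2 hcong' _) (norm_frobeniusTerm_sub_le hp2 hcong' _))
  · rw [div_mul_eq_mul_div, div_mul_eq_mul_div, ← sub_div, norm_div, norm_two_eq_one hp2, div_one]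
    refine IsUltrametricDist.norm_mul_sub_mul_le ?_ (norm_regBernoulliQuot_le_one hk₂ hnd₂) ?_
      (norm_regBernoulliQuot_sub_le hk₁ hk₂ hcong hnd₁ hnd₂)
    · exact_mod_cast norm_int_le_one (2 ^ (k₁ - 1) - 1)
    · rw [sub_sub_sub_cancel_right]
      exact_mod_cast norm_pow_sub_pow_le_of_modEq_totient (a := 2)
        (fun h => hp2 ((Nat.prime_dvd_prime_iff_eq hp.out Nat.prime_two).mp h)) hcong'

theorem norm_coeff_scaled_numSeries_sub_le {r k₁ k₂ : ℕ} (hp2 : p ≠ 2)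
    (he₁ : Even k₁) (he₂ : Even k₂) (hk₁ : 2 ≤ k₁) (hk₂ : 2 ≤ k₂)
    (hcong : k₁ ≡ k₂ [MOD (p ^ r).totient]) (hnd₁ : ¬ (p - 1) ∣ k₁) (hnd₂ : ¬ (p - 1) ∣ k₂)
    (n : ℕ) :
    ‖PowerSeries.coeff n (PowerSeries.map (Rat.castHom ℚ_[p])
        (PowerSeries.C (2 ^ (k₁ - 2) * (k₁ - 1).factorial : ℚ) * numSeries p k₁
          - PowerSeries.C (2 ^ (k₂ - 2) * (k₂ - 1).factorial : ℚ) * numSeries p k₂))‖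
      ≤ (p : ℝ) ^ (-(r : ℤ)) := by
  rw [PowerSeries.coeff_map, eq_ratCast, map_sub, PowerSeries.coeff_C_mul, PowerSeries.coeff_C_mul,
    numSeries, numSeries, PowerSeries.coeff_mk, PowerSeries.coeff_mk, mul_sum, mul_sum,
    ← sum_sub_distrib, Rat.cast_sum]
  refine IsUltrametricDist.norm_sum_le_of_forall_le_of_nonneg (by positivity) fun lam _ => ?_
  exact norm_scaled_Qpk_sub_le hp2 he₁ he₂ hk₁ hk₂ hcong hnd₁ hnd₂ (rows lam)

end Padic

theorem bracket_congruent_general (p r k₁ k₂ : ℕ) [Fact p.Prime] (hp5 : 5 ≤ p)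
    (he₁ : Even k₁) (he₂ : Even k₂) (hk₁ : 2 ≤ k₁) (hk₂ : 2 ≤ k₂)
    (hcong : k₁ ≡ k₂ [MOD Nat.totient (p ^ r)])
    (hnd₁ : ¬ (p - 1) ∣ k₁) (hnd₂ : ¬ (p - 1) ∣ k₂)
    (Q₁ Q₂ : PowerSeries ℚ)
    (hQ₁ : Q₁ * partGen = PowerSeries.C (R := ℚ) (2 ^ (k₁ - 2) * (Nat.factorial (k₁ - 1))) * numSeries p k₁)
    (hQ₂ : Q₂ * partGen = PowerSeries.C (R := ℚ) (2 ^ (k₂ - 2) * (Nat.factorial (k₂ - 1))) * numSeries p k₂) :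
    ∀ n : ℕ, ‖((PowerSeries.coeff (R := ℚ) n Q₁ : ℚ) : ℚ_[p]) - ((PowerSeries.coeff (R := ℚ) n Q₂ : ℚ) : ℚ_[p])‖
      ≤ (p : ℝ) ^ (-(r : ℤ)) := by
  intro n
  let toQp := PowerSeries.map (Rat.castHom ℚ_[p])
  have hG₀ : PowerSeries.constantCoeff (toQp partGen) = 1 := by
    rw [← PowerSeries.coeff_zero_eq_constantCoeff_apply, PowerSeries.coeff_map, partGen,
      PowerSeries.coeff_mk, Fintype.card_unique, Nat.cast_one, map_one]
  have hG : ∀ n, ‖PowerSeries.coeff n (toQp partGen)‖ ≤ 1 := fun n => by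
    rw [PowerSeries.coeff_map, partGen, PowerSeries.coeff_mk, map_natCast]
    exact IsUltrametricDist.norm_natCast_le_one ℚ_[p] _
  have h := PowerSeries.norm_coeff_le_of_mul_eq (X := toQp (Q₁ - Q₂)) hG₀ hG
    (Padic.norm_coeff_scaled_numSeries_sub_le (by omega) he₁ he₂ hk₁ hk₂ hcong hnd₁ hnd₂)
    (by rw [← map_mul, sub_mul, hQ₁, hQ₂]) n
  rwa [PowerSeries.coeff_map, map_sub, map_sub, eq_ratCast, eq_ratCast] at h

/-- For a prime `p ≥ 5`, `r ≥ 1`, and even `k₁, k₂ ≥ 2` with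
`k₁ ≡ k₂ (mod φ(p^r))` and `k₁, k₂ ≢ 0 (mod p-1)`, every Fourier coefficient of
`𝒬^{(p)}_{k₁} = 2^{k₁-2}(k₁-1)! ⟨Q_{k₁}^{(p)}⟩_q` is congruent mod `p^r` (in `ℤ_p`)
to the corresponding coefficient of `𝒬^{(p)}_{k₂}`.  Here the q-bracket
`⟨f⟩_q = (∑_λ f(λ)q^{|λ|})/(∑_λ q^{|λ|})` is encoded by the defining relation
`Qᵢ ⬝ (∑_λ q^{|λ|}) = 2^{kᵢ-2}(kᵢ-1)! ∑_λ Q_{kᵢ}^{(p)}(λ) q^{|λ|}`. -/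
theorem bracket_congruent (p r k₁ k₂ : ℕ) [Fact p.Prime] (hp5 : 5 ≤ p) (hr : 1 ≤ r)
    (he₁ : Even k₁) (he₂ : Even k₂) (hk₁ : 2 ≤ k₁) (hk₂ : 2 ≤ k₂)
    (hcong : k₁ ≡ k₂ [MOD Nat.totient (p ^ r)])
    (hnd₁ : ¬ (p - 1) ∣ k₁) (hnd₂ : ¬ (p - 1) ∣ k₂)
    (Q₁ Q₂ : PowerSeries ℚ)
    (hQ₁ : Q₁ * partGen = PowerSeries.C (R := ℚ) (2 ^ (k₁ - 2) * (Nat.factorial (k₁ - 1))) * numSeries p k₁)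
    (hQ₂ : Q₂ * partGen = PowerSeries.C (R := ℚ) (2 ^ (k₂ - 2) * (Nat.factorial (k₂ - 1))) * numSeries p k₂) :
    ∀ n : ℕ, ‖((PowerSeries.coeff (R := ℚ) n Q₁ : ℚ) : ℚ_[p]) - ((PowerSeries.coeff (R := ℚ) n Q₂ : ℚ) : ℚ_[p])‖
      ≤ (p : ℝ) ^ (-(r : ℤ)) :=
  bracket_congruent_general p r k₁ k₂ hp5 he₁ he₂ hk₁ hk₂ hcong hnd₁ hnd₂ Q₁ Q₂ hQ₁ hQ₂
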